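/- arXiv:1411.2251 — 3 statements merged into one kernel-verified Lean document; each statement's English description precedes it below -/
import Mathlib

section
/- For every w > 0, the map ρ ↦ (ρ · w · v(ρ)) / (w + v(ρ)) is strictly concave on [0,1], where v is C², nonincreasing (v' ≤ 0), and ρ ↦ ρ·v(ρ) is strictly concave. More precisely, writing q(ρ) = ρ·v(ρ) and q_w(ρ) = ρ·w·v(ρ)/(w + v(ρ)), one has q_w''(ρ) = w²·((v(ρ)+w)·q''(ρ) − 2ρ·v'(ρ)²)/(v(ρ)+w)³ ≤ 0, with strict inequality wherever q'' < 0. -/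
/-!
Differentiating `q_w = w·q/(w + v)` twice, with `q = ρ·v`, gives
`q_w'' = w²·((v + w)·q'' − 2ρ·v'²)/(v + w)³`. Since `v ≥ 0` the denominator is positive, and the
numerator is the negative term `(v + w)·q''` minus the nonnegative term `2ρ·v'²`.
-/

section WeightedFlux

variable {v : ℝ → ℝ}

theorem deriv_deriv_id_mul (hv : Differentiable ℝ v) {ρ : ℝ}
    (hv' : DifferentiableAt ℝ (deriv v) ρ) :
    deriv (deriv fun r => r * v r) ρ = 2 * deriv v ρ + ρ * deriv (deriv v) ρ := by
  have hq' : deriv (fun r => r * v r) = fun r => 1 * v r + r * deriv v r :=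
    funext fun r => ((hasDerivAt_id' r).mul (hv r).hasDerivAt).deriv
  have hq'_deriv : HasDerivAt (fun r => 1 * v r + r * deriv v r)
      (1 * deriv v ρ + (1 * deriv v ρ + ρ * deriv (deriv v) ρ)) ρ :=
    ((hv ρ).hasDerivAt.const_mul 1).add ((hasDerivAt_id' ρ).mul hv'.hasDerivAt)
  rw [hq', hq'_deriv.deriv]
  ring

theorem hasDerivAt_id_mul_const_mul_div (w : ℝ) {r : ℝ} (hv : DifferentiableAt ℝ v r)
    (hr : w + v r ≠ 0) :
    HasDerivAt (fun r => r * w * v r / (w + v r))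
      (w * v r / (w + v r) + w ^ 2 * r * deriv v r / (w + v r) ^ 2) r := by
  refine ((((hasDerivAt_id' r).mul_const w).mul hv.hasDerivAt).div
    (hv.hasDerivAt.const_add w) hr).congr_deriv ?_
  simp only [Pi.mul_apply]
  field_simp
  ring

theorem deriv_deriv_id_mul_const_mul_div (w : ℝ) (hv : Differentiable ℝ v) {ρ : ℝ}
    (hv' : DifferentiableAt ℝ (deriv v) ρ) (hρ : w + v ρ ≠ 0) :
    deriv (deriv fun r => r * w * v r / (w + v r)) ρ
      = w ^ 2 * ((v ρ + w) * deriv (deriv fun r => r * v r) ρ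
          - 2 * ρ * deriv v ρ ^ 2) / (v ρ + w) ^ 3 := by
  have hden : ∀ᶠ r in nhds ρ, w + v r ≠ 0 :=
    (continuous_const.add hv.continuous).continuousAt.eventually_ne hρ
  have hfirst : deriv (fun r => r * w * v r / (w + v r))
      =ᶠ[nhds ρ] fun r => w * v r / (w + v r) + w ^ 2 * r * deriv v r / (w + v r) ^ 2 := by
    filter_upwards [hden] with r hr
    exact (hasDerivAt_id_mul_const_mul_div w (hv r) hr).deriv
  have hvρ := (hv ρ).hasDerivAt
  have hsecond : HasDerivAt
      (fun r => w * v r / (w + v r) + w ^ 2 * r * deriv v r / (w + v r) ^ 2) _ ρ :=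
    ((hvρ.const_mul w).div (hvρ.const_add w) hρ).add
    ((((hasDerivAt_id' ρ).const_mul (w ^ 2)).mul hv'.hasDerivAt).div
      ((hvρ.const_add w).pow 2) (pow_ne_zero 2 hρ))
  rw [hfirst.deriv_eq, hsecond.deriv, deriv_deriv_id_mul hv hv']
  have hρ' : v ρ + w ≠ 0 := by rwa [add_comm]
  simp only [Pi.mul_apply]
  field_simp
  ring

end WeightedFlux

theorem sq_mul_sub_div_cube_neg {w a q ρ d : ℝ} (hw : 0 < w) (ha : 0 < a) (hρ : 0 ≤ ρ)
    (hq : q < 0) : w ^ 2 * (a * q - 2 * ρ * d ^ 2) / a ^ 3 < 0 := by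
  have hnum : a * q - 2 * ρ * d ^ 2 < 0 := by
    nlinarith [mul_neg_of_pos_of_neg ha hq, mul_nonneg hρ (sq_nonneg d)]
  exact div_neg_of_neg_of_pos (mul_neg_of_pos_of_neg (pow_pos hw 2) hnum) (pow_pos ha 3)

theorem stmt0_general (V w : ℝ) (hw : 0 < w)
    (v : ℝ → ℝ) (hv : ContDiff ℝ 2 v)
    (hrange : ∀ ρ ∈ Set.Icc (0:ℝ) 1, v ρ ∈ Set.Icc (0:ℝ) V)
    (hq'' : ∀ ρ ∈ Set.Icc (0:ℝ) 1, deriv (deriv (fun r => r * v r)) ρ < 0) :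
    ∀ ρ ∈ Set.Icc (0:ℝ) 1,
      deriv (deriv (fun r => r * w * v r / (w + v r))) ρ
        = w ^ 2 * ((v ρ + w) * deriv (deriv (fun r => r * v r)) ρ
            - 2 * ρ * (deriv v ρ) ^ 2) / (v ρ + w) ^ 3
      ∧ w ^ 2 * ((v ρ + w) * deriv (deriv (fun r => r * v r)) ρ
            - 2 * ρ * (deriv v ρ) ^ 2) / (v ρ + w) ^ 3 ≤ 0
      ∧ (deriv (deriv (fun r => r * v r)) ρ < 0 →
          w ^ 2 * ((v ρ + w) * deriv (deriv (fun r => r * v r)) ρ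
            - 2 * ρ * (deriv v ρ) ^ 2) / (v ρ + w) ^ 3 < 0) := by
  intro ρ hρ
  have hpos : 0 < v ρ + w := by linarith [(hrange ρ hρ).1]
  have hneg : deriv (deriv fun r => r * v r) ρ < 0 → _ :=
    sq_mul_sub_div_cube_neg (d := deriv v ρ) hw hpos hρ.1
  refine ⟨deriv_deriv_id_mul_const_mul_div w (hv.differentiable (by norm_num))
    (hv.differentiable_deriv_two ρ) (by rw [add_comm]; exact hpos.ne'), (hneg (hq'' ρ hρ)).le, hneg⟩

/-- For `v ∈ C²` nonincreasing with strictly concave flux `q(ρ) = ρ·v(ρ)`,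
the map `q_w(ρ) = ρ·w·v(ρ)/(w + v(ρ))` has second derivative
`w²·((v+w)·q'' − 2ρ·v'²)/(v+w)³`, which is negative (hence `≤ 0`) on `[0,1]`. -/
theorem stmt0 (V w : ℝ) (hV : 0 < V) (hw : 0 < w)
    (v : ℝ → ℝ) (hv : ContDiff ℝ 2 v)
    (hrange : ∀ ρ ∈ Set.Icc (0:ℝ) 1, v ρ ∈ Set.Icc (0:ℝ) V)
    (hv1 : v 1 = 0)
    (hv' : ∀ ρ ∈ Set.Icc (0:ℝ) 1, deriv v ρ ≤ 0)
    (hq'' : ∀ ρ ∈ Set.Icc (0:ℝ) 1, deriv (deriv (fun r => r * v r)) ρ < 0) :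
    ∀ ρ ∈ Set.Icc (0:ℝ) 1,
      deriv (deriv (fun r => r * w * v r / (w + v r))) ρ
        = w ^ 2 * ((v ρ + w) * deriv (deriv (fun r => r * v r)) ρ
            - 2 * ρ * (deriv v ρ) ^ 2) / (v ρ + w) ^ 3
      ∧ w ^ 2 * ((v ρ + w) * deriv (deriv (fun r => r * v r)) ρ
            - 2 * ρ * (deriv v ρ) ^ 2) / (v ρ + w) ^ 3 ≤ 0
      ∧ (deriv (deriv (fun r => r * v r)) ρ < 0 →
          w ^ 2 * ((v ρ + w) * deriv (deriv (fun r => r * v r)) ρ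
            - 2 * ρ * (deriv v ρ) ^ 2) / (v ρ + w) ^ 3 < 0) :=
  stmt0_general V w hw v hv hrange hq''
end

section
/- The function φ : [−1/3, 1/3] → ℝ defined by φ(ε) = (9/8 + 15ε/64)·T for ε ≤ 0 and φ(ε) = (3/8 + 7ε/64)·T for ε > 0, with T > 0 fixed, does not attain a minimum on [−1/3, 1/3]: its infimum equals (3/8)·T but φ(ε) > (3/8)·T for every ε in the domain. -/
private lemma phi_gt (T : ℝ) (hT : 0 < T) :
    ∀ ε ∈ Set.Icc (-(1/3) : ℝ) (1/3),
      3/8 * T < (if ε ≤ 0 then (9/8 + 15 * ε / 64) * T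
        else (3/8 + 7 * ε / 64) * T) := by
  intro ε hε
  obtain ⟨h1, h2⟩ := hε
  by_cases h : ε ≤ 0
  · simp only [h, if_true]
    nlinarith
  · simp only [h, if_false]
    push_neg at h
    nlinarith

private lemma phi_small (T : ℝ) (hT : 0 < T) (δ : ℝ) (hδ : 0 < δ) :
    ∃ ε ∈ Set.Icc (-(1/3) : ℝ) (1/3),
      (if ε ≤ 0 then (9/8 + 15 * ε / 64) * T else (3/8 + 7 * ε / 64) * T)
        < 3/8 * T + δ := by
  refine ⟨min (1/3) (32*δ/(7*T)), ⟨?_, min_le_left _ _⟩, ?_⟩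
  · have : (0:ℝ) < min (1/3) (32*δ/(7*T)) :=
      lt_min (by norm_num) (by positivity)
    linarith
  · have hpos : (0:ℝ) < min (1/3) (32*δ/(7*T)) :=
      lt_min (by norm_num) (by positivity)
    rw [if_neg (not_le.mpr hpos)]
    have hle : min (1/3) (32*δ/(7*T)) ≤ 32*δ/(7*T) := min_le_right _ _
    have h7T : (0:ℝ) < 7 * T := by linarith
    have : 7 * min (1/3) (32*δ/(7*T)) / 64 * T ≤ δ/2 := by
      rw [le_div_iff₀ h7T] at hle
      nlinarith
    nlinarith

/-- The piecewise map `φ(ε) = (9/8 + 15ε/64)T` for `ε ≤ 0`,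
`φ(ε) = (3/8 + 7ε/64)T` for `ε > 0`, does not attain a minimum on `[-1/3, 1/3]`:
its infimum is `(3/8)T` and `φ(ε) > (3/8)T` for every `ε` in the domain. -/
theorem stmt2 (T : ℝ) (hT : 0 < T) :
    sInf ((fun ε : ℝ => if ε ≤ 0 then (9/8 + 15 * ε / 64) * T
        else (3/8 + 7 * ε / 64) * T) '' Set.Icc (-(1/3) : ℝ) (1/3)) = 3/8 * T
    ∧ (∀ ε ∈ Set.Icc (-(1/3) : ℝ) (1/3),
        3/8 * T < (if ε ≤ 0 then (9/8 + 15 * ε / 64) * T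
          else (3/8 + 7 * ε / 64) * T))
    ∧ ¬ ∃ ε₀ ∈ Set.Icc (-(1/3) : ℝ) (1/3),
        ∀ ε ∈ Set.Icc (-(1/3) : ℝ) (1/3),
          (if ε₀ ≤ 0 then (9/8 + 15 * ε₀ / 64) * T else (3/8 + 7 * ε₀ / 64) * T)
          ≤ (if ε ≤ 0 then (9/8 + 15 * ε / 64) * T else (3/8 + 7 * ε / 64) * T) := by
  have hne : ((fun ε : ℝ => if ε ≤ 0 then (9/8 + 15 * ε / 64) * T
      else (3/8 + 7 * ε / 64) * T) '' Set.Icc (-(1/3) : ℝ) (1/3)).Nonempty := by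
    exact ⟨_, Set.mem_image_of_mem _ (by norm_num : (0:ℝ) ∈ Set.Icc (-(1/3):ℝ) (1/3))⟩
  have hbdd : BddBelow ((fun ε : ℝ => if ε ≤ 0 then (9/8 + 15 * ε / 64) * T
      else (3/8 + 7 * ε / 64) * T) '' Set.Icc (-(1/3) : ℝ) (1/3)) := by
    refine ⟨3/8 * T, ?_⟩
    rintro x ⟨ε, hε, rfl⟩
    exact le_of_lt (phi_gt T hT ε hε)
  refine ⟨?_, phi_gt T hT, ?_⟩
  · apply le_antisymm
    · by_contra h
      push_neg at h
      set I := sInf ((fun ε : ℝ => if ε ≤ 0 then (9/8 + 15 * ε / 64) * T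
        else (3/8 + 7 * ε / 64) * T) '' Set.Icc (-(1/3) : ℝ) (1/3)) with hI
      obtain ⟨ε, hε, hlt⟩ := phi_small T hT (I - 3/8*T) (by linarith)
      have := csInf_le hbdd (Set.mem_image_of_mem _ hε)
      linarith
    · apply le_csInf hne
      rintro x ⟨ε, hε, rfl⟩
      exact le_of_lt (phi_gt T hT ε hε)
  · rintro ⟨ε₀, hε₀, hmin⟩
    have hgt := phi_gt T hT ε₀ hε₀
    obtain ⟨ε, hε, hlt⟩ := phi_small T hT
      ((if ε₀ ≤ 0 then (9/8 + 15 * ε₀ / 64) * T else (3/8 + 7 * ε₀ / 64) * T) - 3/8*T)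
      (by linarith)
    have := hmin ε hε
    linarith
end

section
/- Let c > 0 and consider piecewise constant functions of time of the form F(t) = Σ_α ρ_α·1_{[t_α, t_{α+1})}(t) and F'(t) = Σ_α ρ_α·1_{[t'_α, t'_{α+1})}(t) on [0,T], where the crossing times satisfy |t'_α − t_α| ≤ (1/c)·‖η‖_{C⁰} for each α. Then ∫₀ᵀ |F(t) − F'(t)| dt ≤ (1/c)·‖η‖_{C⁰}·Σ_α |ρ_α − ρ_{α−1}|. -/
/-!
Since `1_[a,b) = 1_[a,∞) - 1_[b,∞)` for `a ≤ b`, summation by parts gives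
`F - F' = ∑_α (ρ_{α+1} - ρ_α) (1_[t_{α+1},∞) - 1_[t'_{α+1},∞))`, the boundary terms cancelling
because `t_0 = t'_0` and `t_n = t'_n`. Each bracket is, up to sign, the indicator of an interval
of length `|t_{α+1} - t'_{α+1}|`.
-/

open MeasureTheory Set

theorem Set.indicator_Ico_eq_sub {a b : ℝ} (h : a ≤ b) (f : ℝ → ℝ) :
    (Ico a b).indicator f = (Ici a).indicator f - (Ici b).indicator f := by
  rw [← Ici_sdiff_Ici, indicator_sdiff (Ici_subset_Ici.2 h)]

theorem abs_indicator_Ici_sub_indicator_Ici (a b x : ℝ) :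
    |(Ici a).indicator 1 x - (Ici b).indicator 1 x| =
      (Ico (min a b) (max a b)).indicator (1 : ℝ → ℝ) x := by
  have of_le {u v : ℝ} (h : u ≤ v) :
      |(Ici u).indicator 1 x - (Ici v).indicator 1 x| = (Ico u v).indicator (1 : ℝ → ℝ) x := by
    rw [← Pi.sub_apply, ← indicator_Ico_eq_sub h]
    exact abs_of_nonneg (indicator_nonneg (fun _ _ => zero_le_one) x)
  rcases le_total a b with h | h
  · rw [min_eq_left h, max_eq_right h, of_le h]
  · rw [abs_sub_comm, min_eq_right h, max_eq_left h, of_le h]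

theorem integrable_abs_indicator_Ici_sub_indicator_Ici (a b : ℝ) :
    Integrable (fun x => |(Ici a).indicator 1 x - (Ici b).indicator (1 : ℝ → ℝ) x|) := by
  simp_rw [abs_indicator_Ici_sub_indicator_Ici]
  exact (integrableOn_const measure_Ico_lt_top.ne).integrable_indicator measurableSet_Ico

theorem setIntegral_abs_indicator_Ici_sub_indicator_Ici_le (S : Set ℝ) (a b : ℝ) :
    ∫ x in S, |(Ici a).indicator 1 x - (Ici b).indicator (1 : ℝ → ℝ) x| ≤ |a - b| := by
  simp_rw [abs_indicator_Ici_sub_indicator_Ici, integral_indicator_one measurableSet_Ico,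
    measureReal_restrict_apply measurableSet_Ico]
  calc volume.real (Ico (min a b) (max a b) ∩ S) ≤ volume.real (Ico (min a b) (max a b)) :=
        measureReal_mono inter_subset_left measure_Ico_lt_top.ne
    _ = |a - b| := by rw [Real.volume_real_Ico_of_le min_le_max, max_sub_min_eq_abs']

theorem Finset.sum_range_mul_sub_succ {R : Type*} [CommRing R] (n : ℕ) (ρ g : ℕ → R)
    (h0 : g 0 = 0) (hn : g n = 0) :
    ∑ α ∈ range n, ρ α * (g α - g (α + 1)) =
      ∑ α ∈ range (n - 1), (ρ (α + 1) - ρ α) * g (α + 1) := by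
  have := Finset.sum_range_by_parts ρ (fun i => g i - g (i + 1)) n
  simp only [smul_eq_mul, Finset.sum_range_sub', h0, hn, zero_sub, mul_neg, sub_zero] at this
  rw [this]
  simp [Finset.sum_neg_distrib]

noncomputable def stepFun (n : ℕ) (ρ t : ℕ → ℝ) (x : ℝ) : ℝ :=
  ∑ α ∈ Finset.range n, (Ico (t α) (t (α + 1))).indicator (fun _ => ρ α) x

section stepFun

variable {n : ℕ} {ρ t t' : ℕ → ℝ}

theorem stepFun_eq_sum_mul (ht : ∀ α < n, t α ≤ t (α + 1)) (x : ℝ) :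
    stepFun n ρ t x = ∑ α ∈ Finset.range n,
      ρ α * ((Ici (t α)).indicator 1 x - (Ici (t (α + 1))).indicator 1 x) := by
  refine Finset.sum_congr rfl fun α hα => ?_
  rw [indicator_Ico_eq_sub (ht α (Finset.mem_range.1 hα))]
  simp [indicator_apply, mul_sub]

theorem stepFun_sub_stepFun (ht : ∀ α < n, t α ≤ t (α + 1)) (ht' : ∀ α < n, t' α ≤ t' (α + 1))
    (h0 : t 0 = t' 0) (hn : t n = t' n) (x : ℝ) :
    stepFun n ρ t x - stepFun n ρ t' x = ∑ α ∈ Finset.range (n - 1), (ρ (α + 1) - ρ α) *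
      ((Ici (t (α + 1))).indicator 1 x - (Ici (t' (α + 1))).indicator 1 x) := by
  rw [stepFun_eq_sum_mul ht, stepFun_eq_sum_mul ht', ← Finset.sum_sub_distrib,
    ← Finset.sum_range_mul_sub_succ n ρ
      (fun α => (Ici (t α)).indicator 1 x - (Ici (t' α)).indicator 1 x) (by simp [h0]) (by simp [hn])]
  exact Finset.sum_congr rfl fun α _ => by ring

theorem setIntegral_abs_stepFun_sub_stepFun_le (S : Set ℝ) (ht : ∀ α < n, t α ≤ t (α + 1))
    (ht' : ∀ α < n, t' α ≤ t' (α + 1)) (h0 : t 0 = t' 0) (hn : t n = t' n) :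
    ∫ x in S, |stepFun n ρ t x - stepFun n ρ t' x| ≤
      ∑ α ∈ Finset.range (n - 1), |ρ (α + 1) - ρ α| * |t (α + 1) - t' (α + 1)| := by
  have pointwise (x : ℝ) : |stepFun n ρ t x - stepFun n ρ t' x| ≤
      ∑ α ∈ Finset.range (n - 1), |ρ (α + 1) - ρ α| *
        |(Ici (t (α + 1))).indicator 1 x - (Ici (t' (α + 1))).indicator (1 : ℝ → ℝ) x| := by
    rw [stepFun_sub_stepFun ht ht' h0 hn]
    exact (Finset.abs_sum_le_sum_abs _ _).trans_eq (by simp only [abs_mul])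
  calc ∫ x in S, |stepFun n ρ t x - stepFun n ρ t' x|
      ≤ ∫ x in S, ∑ α ∈ Finset.range (n - 1), |ρ (α + 1) - ρ α| *
          |(Ici (t (α + 1))).indicator 1 x - (Ici (t' (α + 1))).indicator (1 : ℝ → ℝ) x| :=
        integral_mono_of_nonneg (ae_of_all _ fun _ => abs_nonneg _)
          (integrable_finsetSum _ fun α _ =>
            ((integrable_abs_indicator_Ici_sub_indicator_Ici _ _).const_mul _).restrict)
          (ae_of_all _ pointwise)
    _ = ∑ α ∈ Finset.range (n - 1), |ρ (α + 1) - ρ α| * ∫ x in S,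
          |(Ici (t (α + 1))).indicator 1 x - (Ici (t' (α + 1))).indicator (1 : ℝ → ℝ) x| := by
        rw [integral_finsetSum _ fun α _ =>
          ((integrable_abs_indicator_Ici_sub_indicator_Ici _ _).const_mul _).restrict]
        simp only [integral_const_mul]
    _ ≤ _ := Finset.sum_le_sum fun α _ => mul_le_mul_of_nonneg_left
        (setIntegral_abs_indicator_Ici_sub_indicator_Ici_le S _ _) (abs_nonneg _)

end stepFun

theorem stmt10_general (T c Mη : ℝ) (hT : 0 ≤ T)
    (n : ℕ) (ρ t t' : ℕ → ℝ)
    (hmono : ∀ α, t α ≤ t (α + 1)) (hmono' : ∀ α, t' α ≤ t' (α + 1))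
    (hfirst : t 0 = t' 0) (hlast : t n = t' n)
    (hclose : ∀ α ≤ n, |t' α - t α| ≤ 1 / c * Mη) :
    ∫ s in (0:ℝ)..T,
        |(∑ α ∈ Finset.range n,
            Set.indicator (Set.Ico (t α) (t (α + 1))) (fun _ => ρ α) s)
          - (∑ α ∈ Finset.range n,
            Set.indicator (Set.Ico (t' α) (t' (α + 1))) (fun _ => ρ α) s)|
      ≤ 1 / c * Mη * ∑ α ∈ Finset.range (n - 1), |ρ (α + 1) - ρ α| := by
  rw [intervalIntegral.integral_of_le hT, Finset.mul_sum]
  calc _ ≤ ∑ α ∈ Finset.range (n - 1), |ρ (α + 1) - ρ α| * |t (α + 1) - t' (α + 1)| :=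
        setIntegral_abs_stepFun_sub_stepFun_le _ (fun α _ => hmono α) (fun α _ => hmono' α)
          hfirst hlast
    _ ≤ _ := Finset.sum_le_sum fun α hα => by
        rw [mul_comm, abs_sub_comm]
        gcongr
        exact hclose (α + 1) (by have := Finset.mem_range.1 hα; omega)

/-- two piecewise constant functions taking the same ordered values
`ρ_α`, with jump times shifted by at most `(1/c)·‖η‖_{C⁰}`, differ in `L¹([0,T])`
by at most `(1/c)·‖η‖_{C⁰}` times the total variation `Σ_α |ρ_α − ρ_{α−1}|`. -/
theorem stmt10 (T c Mη : ℝ) (hT : 0 ≤ T) (hc : 0 < c) (hMη : 0 ≤ Mη)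
    (n : ℕ) (ρ t t' : ℕ → ℝ)
    (hmono : ∀ α, t α ≤ t (α + 1)) (hmono' : ∀ α, t' α ≤ t' (α + 1))
    (hfirst : t 0 = t' 0) (hlast : t n = t' n)
    (hclose : ∀ α ≤ n, |t' α - t α| ≤ 1 / c * Mη) :
    ∫ s in (0:ℝ)..T,
        |(∑ α ∈ Finset.range n,
            Set.indicator (Set.Ico (t α) (t (α + 1))) (fun _ => ρ α) s)
          - (∑ α ∈ Finset.range n,
            Set.indicator (Set.Ico (t' α) (t' (α + 1))) (fun _ => ρ α) s)|
      ≤ 1 / c * Mη * ∑ α ∈ Finset.range (n - 1), |ρ (α + 1) - ρ α| :=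
  stmt10_general T c Mη hT n ρ t t' hmono hmono' hfirst hlast hclose
end
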